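/- arXiv:2110.05168 — 4 statements merged into one kernel-verified Lean document; each statement's English description precedes it below -/
import Mathlib

section
/- Let s₁ and s₂ be related strings of length n and let T be a finite set of blocks of (s₁, s₂) such that any two distinct blocks in T do not overlap. Then the multiset of symbols s₁[j] over all positions j of s₁ that are not covered by the interval [k¹_b, k¹_b + t_b) of any block b ∈ T equals the multiset of symbols s₂[j] over all positions j of s₂ that are not covered by the interval [k²_b, k²_b + t_b) of any block b ∈ T. -/
/-- A common partition of strings `s₁` and `s₂`: a multiset of nonempty strings
(represented by the two orderings `P₁`, `P₂`, which are permutations of each other)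
whose concatenations are `s₁` and `s₂` respectively. -/
def CommonPartition {α : Type*} (s₁ s₂ : List α) (P₁ P₂ : List (List α)) : Prop :=
  P₁.Perm P₂ ∧ (∀ p ∈ P₁, p ≠ []) ∧ P₁.flatten = s₁ ∧ P₂.flatten = s₂

/-- A block of the pair of strings `(s₁, s₂)`: a triple `(k¹, k², t)` with `t ≥ 1`,
`k¹ + t ≤ |s₁|`, `k² + t ≤ |s₂|`, and the substring of `s₁` of length `t` starting at
`k¹` equals the substring of `s₂` of length `t` starting at `k²`. -/
def IsBlock {α : Type*} (s₁ s₂ : List α) (b : ℕ × ℕ × ℕ) : Prop :=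
  1 ≤ b.2.2 ∧ b.1 + b.2.2 ≤ s₁.length ∧ b.2.1 + b.2.2 ≤ s₂.length ∧
    (s₁.drop b.1).take b.2.2 = (s₂.drop b.2.1).take b.2.2

/-- Blocks `bᵢ = (kᵢ¹, kᵢ², tᵢ)` and `b_j = (k_j¹, k_j², t_j)` overlap if
`kᵢ¹ − t_j < k_j¹ < kᵢ¹ + tᵢ` or `kᵢ² − t_j < k_j² < kᵢ² + tᵢ` (over the integers). -/
def Overlap (bi bj : ℕ × ℕ × ℕ) : Prop :=
  ((bi.1 : ℤ) - bj.2.2 < bj.1 ∧ (bj.1 : ℤ) < bi.1 + bi.2.2) ∨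
  ((bi.2.1 : ℤ) - bj.2.2 < bj.2.1 ∧ (bj.2.1 : ℤ) < bi.2.1 + bi.2.2)

lemma map_range'_getD {α : Type*} [Inhabited α] (s : List α) :
    ∀ (t k : ℕ), k + t ≤ s.length →
    (List.range' k t).map (fun j => s.getD j default) = (s.drop k).take t := by
  intro t
  induction t with
  | zero => simp
  | succ t ih =>
    intro k h
    have hk : k < s.length := by omega
    rw [List.range'_succ, List.map_cons, ih (k+1) (by omega)]
    conv_rhs => rw [List.drop_eq_getElem_cons hk, List.take_succ_cons]
    rw [List.getD_eq_getElem s default hk]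

lemma map_Ico_getD {α : Type*} [Inhabited α] (s : List α) (k t : ℕ) (h : k + t ≤ s.length) :
    (Finset.Ico k (k + t)).val.map (fun j => s.getD j default) =
      ((s.drop k).take t : List α) := by
  rw [Nat.Ico_eq_range']
  have : k + t - k = t := by omega
  rw [this]
  show ((List.range' k t).map (fun j => s.getD j default) : Multiset α) = _
  rw [map_range'_getD s t k h]

/-- For related strings and a set of pairwise non-overlapping blocks, the multiset of
symbols of `s₁` at positions not covered by any block (in `s₁`) equals the multiset of
symbols of `s₂` at positions not covered by any block (in `s₂`). -/
theorem uncovered_multisets_eq {α : Type*} [Inhabited α] (s₁ s₂ : List α) (n : ℕ)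
    (h₁ : s₁.length = n) (h₂ : s₂.length = n) (hrel : s₁.Perm s₂)
    (T : Finset (ℕ × ℕ × ℕ)) (hT : ∀ b ∈ T, IsBlock s₁ s₂ b)
    (hno : ∀ b ∈ T, ∀ b' ∈ T, b ≠ b' → ¬ Overlap b b') :
    (((Finset.range n).filter
        (fun j => ∀ b ∈ T, ¬ (b.1 ≤ j ∧ j < b.1 + b.2.2))).val.map
      (fun j => s₁.getD j default)) =
    (((Finset.range n).filter
        (fun j => ∀ b ∈ T, ¬ (b.2.1 ≤ j ∧ j < b.2.1 + b.2.2))).val.map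
      (fun j => s₂.getD j default)) := by
  classical
  set f₁ : ℕ → α := fun j => s₁.getD j default
  set f₂ : ℕ → α := fun j => s₂.getD j default
  set p₁ : ℕ → Prop := fun j => ∀ b ∈ T, ¬ (b.1 ≤ j ∧ j < b.1 + b.2.2) with hp₁
  set p₂ : ℕ → Prop := fun j => ∀ b ∈ T, ¬ (b.2.1 ≤ j ∧ j < b.2.1 + b.2.2) with hp₂
  -- disjointness of intervals
  have hdisj₁ : (↑T : Set (ℕ × ℕ × ℕ)).PairwiseDisjoint
      (fun b : ℕ × ℕ × ℕ => Finset.Ico b.1 (b.1 + b.2.2)) := by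
    intro b hb b' hb' hne
    have h := hno b hb b' hb' hne
    simp only [Function.onFun]
    rw [Finset.disjoint_left]
    intro j hj hj'
    simp only [Finset.mem_Ico] at hj hj'
    apply h
    left
    omega
  have hdisj₂ : (↑T : Set (ℕ × ℕ × ℕ)).PairwiseDisjoint
      (fun b : ℕ × ℕ × ℕ => Finset.Ico b.2.1 (b.2.1 + b.2.2)) := by
    intro b hb b' hb' hne
    have h := hno b hb b' hb' hne
    simp only [Function.onFun]
    rw [Finset.disjoint_left]
    intro j hj hj'
    simp only [Finset.mem_Ico] at hj hj'
    apply h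
    right
    omega
  -- covered sets as disjoint unions
  have hc₁ : (Finset.range n).filter (fun j => ¬ p₁ j) =
      T.disjiUnion (fun b => Finset.Ico b.1 (b.1 + b.2.2)) hdisj₁ := by
    ext j
    simp only [Finset.mem_filter, Finset.mem_range, Finset.mem_disjiUnion, Finset.mem_Ico, hp₁]
    push_neg
    constructor
    · rintro ⟨-, b, hb, h⟩; exact ⟨b, hb, h⟩
    · rintro ⟨b, hb, h⟩
      exact ⟨by have := (hT b hb).2.1; omega, b, hb, h⟩
  have hc₂ : (Finset.range n).filter (fun j => ¬ p₂ j) =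
      T.disjiUnion (fun b => Finset.Ico b.2.1 (b.2.1 + b.2.2)) hdisj₂ := by
    ext j
    simp only [Finset.mem_filter, Finset.mem_range, Finset.mem_disjiUnion, Finset.mem_Ico, hp₂]
    push_neg
    constructor
    · rintro ⟨-, b, hb, h⟩; exact ⟨b, hb, h⟩
    · rintro ⟨b, hb, h⟩
      exact ⟨by have := (hT b hb).2.2.1; omega, b, hb, h⟩
  -- covered multisets are equal
  have hcov :
      ((Finset.range n).filter (fun j => ¬ p₁ j)).val.map f₁ =
      ((Finset.range n).filter (fun j => ¬ p₂ j)).val.map f₂ := by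
    rw [hc₁, hc₂, Finset.disjiUnion_val, Finset.disjiUnion_val,
      Multiset.map_bind, Multiset.map_bind]
    apply Multiset.bind_congr
    intro b hb
    rw [Finset.mem_val] at hb
    obtain ⟨ht, hb1, hb2, heq⟩ := hT b hb
    rw [map_Ico_getD s₁ _ _ hb1, map_Ico_getD s₂ _ _ hb2, heq]
  -- totals are equal
  have htot : (Finset.range n).val.map f₁ = (Finset.range n).val.map f₂ := by
    have e₁ : (Finset.range n).val.map f₁ = (s₁ : Multiset α) := by
      rw [Finset.range_val, Multiset.range]
      show ((List.range n).map f₁ : Multiset α) = _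
      rw [List.range_eq_range', map_range'_getD s₁ n 0 (by omega),
        ← h₁, List.drop_zero, List.take_length]
    have e₂ : (Finset.range n).val.map f₂ = (s₂ : Multiset α) := by
      rw [Finset.range_val, Multiset.range]
      show ((List.range n).map f₂ : Multiset α) = _
      rw [List.range_eq_range', map_range'_getD s₂ n 0 (by omega),
        ← h₂, List.drop_zero, List.take_length]
    rw [e₁, e₂]
    exact Multiset.coe_eq_coe.mpr hrel
  -- split and cancel
  have split₁ : ((Finset.range n).filter p₁).val.map f₁ +
      ((Finset.range n).filter (fun j => ¬ p₁ j)).val.map f₁ =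
      (Finset.range n).val.map f₁ := by
    rw [← Multiset.map_add, Finset.filter_val, Finset.filter_val,
      Multiset.filter_add_not]
  have split₂ : ((Finset.range n).filter p₂).val.map f₂ +
      ((Finset.range n).filter (fun j => ¬ p₂ j)).val.map f₂ =
      (Finset.range n).val.map f₂ := by
    rw [← Multiset.map_add, Finset.filter_val, Finset.filter_val,
      Multiset.filter_add_not]
  have key : ((Finset.range n).filter p₁).val.map f₁ +
      ((Finset.range n).filter (fun j => ¬ p₁ j)).val.map f₁ =
      ((Finset.range n).filter p₂).val.map f₂ +
      ((Finset.range n).filter (fun j => ¬ p₁ j)).val.map f₁ := by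
    rw [split₁, htot, ← split₂, hcov]
  exact add_right_cancel key
end

section
/- Let s₁ and s₂ be related strings of length n and let T be a finite set of blocks of (s₁, s₂) such that any two distinct blocks in T do not overlap. Then there exists a common partition of s₁ and s₂ of size exactly n − Σ_{b∈T}(t_b − 1), obtained by using one piece of length t_b for each block b ∈ T and a length-one piece for each position not covered by any block of T. -/
namespace CPAux

def chop {α : Type*} : List (ℕ × ℕ) → ℕ → List α → List (List α)
  | [], _, s => s.map (fun a => [a])
  | (k, t) :: L, i, s =>
      (s.take (k - i)).map (fun a => [a]) ++
        ((s.drop (k - i)).take t) :: chop L (k + t) (s.drop (k - i + t))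

def WF : List (ℕ × ℕ) → ℕ → ℕ → Prop
  | [], _, _ => True
  | (k, t) :: L, i, m => i ≤ k ∧ 1 ≤ t ∧ k + t ≤ m ∧ WF L (k + t) m

lemma flatten_map_singleton {α : Type*} (s : List α) :
    (s.map (fun a => [a])).flatten = s := by
  induction s with
  | nil => rfl
  | cons a l ih => simp [ih]

lemma wf_mem {L : List (ℕ × ℕ)} {i m : ℕ} (h : WF L i m) :
    ∀ p ∈ L, i ≤ p.1 ∧ 1 ≤ p.2 ∧ p.1 + p.2 ≤ m := by
  induction L generalizing i with
  | nil => simp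
  | cons hd tl ih =>
    obtain ⟨k, t⟩ := hd
    obtain ⟨h1, h2, h3, h4⟩ := h
    intro p hp
    rcases List.mem_cons.mp hp with rfl | hp
    · exact ⟨h1, h2, h3⟩
    · have := ih h4 p hp
      refine ⟨by omega, this.2.1, this.2.2⟩

lemma wf_of_pairwise {L : List (ℕ × ℕ)} {i m : ℕ}
    (hp : L.Pairwise (fun p q => p.1 + p.2 ≤ q.1))
    (hb : ∀ p ∈ L, i ≤ p.1 ∧ 1 ≤ p.2 ∧ p.1 + p.2 ≤ m) : WF L i m := by
  induction L generalizing i with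
  | nil => trivial
  | cons hd tl ih =>
    obtain ⟨k, t⟩ := hd
    obtain ⟨hhd, htl⟩ := List.pairwise_cons.mp hp
    have h0 := hb (k, t) (by simp)
    exact ⟨h0.1, h0.2.1, h0.2.2, ih htl fun p hp' =>
      ⟨hhd p hp', (hb p (by simp [hp'])).2.1, (hb p (by simp [hp'])).2.2⟩⟩

lemma chop_spec {α : Type*} :
    ∀ (L : List (ℕ × ℕ)) (i : ℕ) (s : List α) (m : ℕ),
      WF L i m → s.length + i = m →
      (chop L i s).flatten = s ∧
      (∀ p ∈ chop L i s, p ≠ []) ∧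
      (chop L i s).length + (L.map (fun p => p.2 - 1)).sum = s.length ∧
      ∃ u : Multiset α,
        (s : Multiset α) =
            (L.map (fun p => (((s.drop (p.1 - i)).take p.2 : List α) : Multiset α))).sum + u ∧
        ((chop L i s : List (List α)) : Multiset (List α)) =
            ↑(L.map (fun p => (s.drop (p.1 - i)).take p.2)) +
              u.map (fun a => [a])
  | [], i, s, m, _, _ => by
    refine ⟨?_, ?_, ?_, s, ?_, ?_⟩ <;>
      simp [chop, flatten_map_singleton, Multiset.map_coe]
  | (k, t) :: L, i, s, m, hw, hlen => by
    obtain ⟨hik, ht, hkm, hw'⟩ := hw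
    have hmem := wf_mem hw'
    have hjt : k - i + t ≤ s.length := by omega
    obtain ⟨ihf, ihne, ihlen, u, ihc, ihm⟩ :=
      chop_spec L (k + t) (s.drop (k - i + t)) m hw' (by simp; omega)
    have hpc : ∀ p ∈ L, ((s.drop (k - i + t)).drop (p.1 - (k + t))).take p.2
        = (s.drop (p.1 - i)).take p.2 := by
      intro p hp
      have h := hmem p hp
      rw [List.drop_drop]
      congr 2
      omega
    have hpieces : (L.map (fun p => (((s.drop (k - i + t)).drop (p.1 - (k + t))).take p.2)))
        = L.map (fun p => (s.drop (p.1 - i)).take p.2) :=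
      List.map_congr_left hpc
    have hpieces' : (L.map (fun p =>
          ((((s.drop (k - i + t)).drop (p.1 - (k + t))).take p.2 : List α) : Multiset α)))
        = L.map (fun p => (((s.drop (p.1 - i)).take p.2 : List α) : Multiset α)) :=
      List.map_congr_left fun p hp => by rw [hpc p hp]
    rw [hpieces'] at ihc
    rw [hpieces] at ihm
    have hdrop : (s.drop (k - i)).drop t = s.drop (k - i + t) := by
      rw [List.drop_drop]
    have hdec : s = s.take (k - i) ++ ((s.drop (k - i)).take t ++ s.drop (k - i + t)) := by
      rw [← hdrop, List.take_append_drop, List.take_append_drop]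
    refine ⟨?_, ?_, ?_, ↑(s.take (k - i)) + u, ?_, ?_⟩
    · simp only [chop, List.flatten_append, List.flatten_cons, ihf, flatten_map_singleton]
      exact hdec.symm
    · intro p hp
      simp only [chop, List.mem_append, List.mem_cons, List.mem_map] at hp
      rcases hp with ⟨a, _, rfl⟩ | rfl | hp
      · simp
      · apply List.ne_nil_of_length_pos
        simp
        omega
      · exact ihne p hp
    · simp only [chop, List.length_append, List.length_cons, List.length_map,
        List.map_cons, List.sum_cons, List.length_take]
      simp only [List.length_drop] at ihlen
      rw [Nat.min_eq_left (by omega : k - i ≤ s.length)]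
      omega
    · simp only [List.map_cons, List.sum_cons]
      conv_lhs => rw [hdec]
      rw [← Multiset.coe_add, ← Multiset.coe_add, ihc]
      show (↑(s.take (k - i)) : Multiset α) + (↑((s.drop (k - i)).take t) +
        ((L.map (fun p => (((s.drop (p.1 - i)).take p.2 : List α) : Multiset α))).sum + u)) = _
      abel
    · simp only [chop, List.map_cons]
      rw [← Multiset.coe_add, ← Multiset.cons_coe, ← Multiset.cons_coe, ihm,
        ← Multiset.map_coe, Multiset.map_add]
      show Multiset.map (fun a => [a]) (↑(s.take (k - i))) +
          ((s.drop (k - i)).take t ::ₘ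
            (↑(L.map (fun p => (s.drop (p.1 - i)).take p.2)) + Multiset.map (fun a => [a]) u)) =
        ((s.drop (k - i)).take t ::ₘ ↑(L.map (fun p => (s.drop (p.1 - i)).take p.2))) +
          (Multiset.map (fun a => [a]) (↑(s.take (k - i))) + Multiset.map (fun a => [a]) u)
      rw [Multiset.add_cons, Multiset.cons_add]
      congr 1
      abel

lemma build {α : Type*} (s : List α) (n : ℕ) (h : s.length = n) (l₀ : List (ℕ × ℕ))
    (hnd : l₀.Nodup)
    (hbound : ∀ p ∈ l₀, 1 ≤ p.2 ∧ p.1 + p.2 ≤ n)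
    (hdisj : ∀ p ∈ l₀, ∀ q ∈ l₀, p ≠ q → p.1 ≤ q.1 → p.1 + p.2 ≤ q.1) :
    ∃ P : List (List α), P.flatten = s ∧ (∀ p ∈ P, p ≠ []) ∧
      P.length + (l₀.map (fun p => p.2 - 1)).sum = n ∧
      ∃ u : Multiset α,
        (s : Multiset α) =
          (Multiset.map (fun p : ℕ × ℕ => (((s.drop p.1).take p.2 : List α) : Multiset α))
            (l₀ : Multiset (ℕ × ℕ))).sum + u ∧
        (↑P : Multiset (List α)) =
          Multiset.map (fun p : ℕ × ℕ => (s.drop p.1).take p.2) (l₀ : Multiset (ℕ × ℕ)) +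
            u.map (fun a => [a]) := by
  classical
  have hrt : IsTrans (ℕ × ℕ) (fun p q => p.1 ≤ q.1) := ⟨fun a b c hab hbc => le_trans hab hbc⟩
  have hrtot : IsTotal (ℕ × ℕ) (fun p q => p.1 ≤ q.1) := ⟨fun a b => le_total a.1 b.1⟩
  set l := l₀.insertionSort (fun p q => p.1 ≤ q.1) with hldef
  have hperm : l.Perm l₀ := List.perm_insertionSort _ l₀
  have hmem : ∀ p ∈ l, p ∈ l₀ := fun p hp => hperm.mem_iff.mp hp
  have hsorted : l.Pairwise (fun p q => p.1 ≤ q.1) := List.pairwise_insertionSort _ l₀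
  have hnodup : l.Nodup := hperm.nodup_iff.mpr hnd
  have hchain : l.Pairwise (fun p q => p.1 + p.2 ≤ q.1) := by
    refine (hsorted.and hnodup).imp_of_mem ?_
    intro p q hp hq hpq
    exact hdisj p (hmem p hp) q (hmem q hq) hpq.2 hpq.1
  have hwf : WF l 0 n := wf_of_pairwise hchain
    (fun p hp => ⟨Nat.zero_le _, (hbound p (hmem p hp)).1, (hbound p (hmem p hp)).2⟩)
  obtain ⟨hfl, hne, hlen, u, hc, hm⟩ := chop_spec l 0 s n hwf (by omega)
  simp only [Nat.sub_zero] at hc hm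
  have hcoe : (↑l₀ : Multiset (ℕ × ℕ)) = ↑l := (Multiset.coe_eq_coe.mpr hperm).symm
  refine ⟨chop l 0 s, hfl, hne, ?_, u, ?_, ?_⟩
  · have hsum := (hperm.map (fun p : ℕ × ℕ => p.2 - 1)).sum_eq
    omega
  · rw [hc]
    congr 1
    rw [hcoe, Multiset.map_coe, Multiset.sum_coe]
  · rw [hm, hcoe, Multiset.map_coe]

end CPAux

/-- From a set of pairwise non-overlapping blocks of related strings of length `n`, one
obtains a common partition of size `n − Σ_{b∈T} (t_b − 1)`. -/
theorem commonPartition_of_blocks {α : Type*} (s₁ s₂ : List α) (n : ℕ)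
    (h₁ : s₁.length = n) (h₂ : s₂.length = n) (hrel : s₁.Perm s₂)
    (T : Finset (ℕ × ℕ × ℕ)) (hT : ∀ b ∈ T, IsBlock s₁ s₂ b)
    (hno : ∀ b ∈ T, ∀ b' ∈ T, b ≠ b' → ¬ Overlap b b') :
    ∃ P₁ P₂ : List (List α), CommonPartition s₁ s₂ P₁ P₂ ∧
      P₁.length = n - ∑ b ∈ T, (b.2.2 - 1) := by
  classical
  -- Nodup of the two projected lists
  have hnd₁ : (T.toList.map (fun b => (b.1, b.2.2))).Nodup := by
    refine List.Nodup.map_on ?_ T.nodup_toList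
    intro b hb b' hb' he
    rw [Finset.mem_toList] at hb hb'
    by_contra hne
    have hx1 : b.1 = b'.1 := by simpa using (Prod.ext_iff.mp he).1
    have hx2 : b.2.2 = b'.2.2 := by simpa using (Prod.ext_iff.mp he).2
    have ht := (hT b hb).1
    have ht' := (hT b' hb').1
    exact hno b hb b' hb' hne (Or.inl ⟨by omega, by omega⟩)
  have hnd₂ : (T.toList.map (fun b => (b.2.1, b.2.2))).Nodup := by
    refine List.Nodup.map_on ?_ T.nodup_toList
    intro b hb b' hb' he
    rw [Finset.mem_toList] at hb hb'
    by_contra hne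
    have hx1 : b.2.1 = b'.2.1 := by simpa using (Prod.ext_iff.mp he).1
    have hx2 : b.2.2 = b'.2.2 := by simpa using (Prod.ext_iff.mp he).2
    have ht := (hT b hb).1
    have ht' := (hT b' hb').1
    exact hno b hb b' hb' hne (Or.inr ⟨by omega, by omega⟩)
  have hbound₁ : ∀ p ∈ T.toList.map (fun b => (b.1, b.2.2)), 1 ≤ p.2 ∧ p.1 + p.2 ≤ n := by
    intro p hp
    obtain ⟨b, hb, rfl⟩ := List.mem_map.mp hp
    rw [Finset.mem_toList] at hb
    have := hT b hb
    exact ⟨this.1, h₁ ▸ this.2.1⟩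
  have hbound₂ : ∀ p ∈ T.toList.map (fun b => (b.2.1, b.2.2)), 1 ≤ p.2 ∧ p.1 + p.2 ≤ n := by
    intro p hp
    obtain ⟨b, hb, rfl⟩ := List.mem_map.mp hp
    rw [Finset.mem_toList] at hb
    have := hT b hb
    exact ⟨this.1, h₂ ▸ this.2.2.1⟩
  have hdisj₁ : ∀ p ∈ T.toList.map (fun b => (b.1, b.2.2)),
      ∀ q ∈ T.toList.map (fun b => (b.1, b.2.2)), p ≠ q → p.1 ≤ q.1 → p.1 + p.2 ≤ q.1 := by
    intro p hp q hq hpq hle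
    obtain ⟨b, hb, rfl⟩ := List.mem_map.mp hp
    obtain ⟨b', hb', rfl⟩ := List.mem_map.mp hq
    rw [Finset.mem_toList] at hb hb'
    have hbne : b ≠ b' := fun he => hpq (by rw [he])
    have ht' := (hT b' hb').1
    have hno' : ¬(((b.1 : ℤ) - b'.2.2 < b'.1) ∧ ((b'.1 : ℤ) < b.1 + b.2.2)) :=
      fun hov => hno b hb b' hb' hbne (Or.inl hov)
    simp only at hle ⊢
    omega
  have hdisj₂ : ∀ p ∈ T.toList.map (fun b => (b.2.1, b.2.2)),
      ∀ q ∈ T.toList.map (fun b => (b.2.1, b.2.2)), p ≠ q → p.1 ≤ q.1 → p.1 + p.2 ≤ q.1 := by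
    intro p hp q hq hpq hle
    obtain ⟨b, hb, rfl⟩ := List.mem_map.mp hp
    obtain ⟨b', hb', rfl⟩ := List.mem_map.mp hq
    rw [Finset.mem_toList] at hb hb'
    have hbne : b ≠ b' := fun he => hpq (by rw [he])
    have ht' := (hT b' hb').1
    have hno' : ¬(((b.2.1 : ℤ) - b'.2.2 < b'.2.1) ∧ ((b'.2.1 : ℤ) < b.2.1 + b.2.2)) :=
      fun hov => hno b hb b' hb' hbne (Or.inr hov)
    simp only at hle ⊢
    omega
  obtain ⟨P₁, hfl₁, hne₁, hlen₁, u₁, hc₁, hm₁⟩ :=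
    CPAux.build s₁ n h₁ (T.toList.map (fun b => (b.1, b.2.2))) hnd₁ hbound₁ hdisj₁
  obtain ⟨P₂, hfl₂, hne₂, hlen₂, u₂, hc₂, hm₂⟩ :=
    CPAux.build s₂ n h₂ (T.toList.map (fun b => (b.2.1, b.2.2))) hnd₂ hbound₂ hdisj₂
  have hpieceeq : Multiset.map (fun p : ℕ × ℕ => (s₁.drop p.1).take p.2)
        ↑(T.toList.map (fun b => (b.1, b.2.2)))
      = Multiset.map (fun p : ℕ × ℕ => (s₂.drop p.1).take p.2)
        ↑(T.toList.map (fun b => (b.2.1, b.2.2))) := by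
    rw [← Multiset.map_coe, ← Multiset.map_coe, Multiset.map_map, Multiset.map_map]
    refine Multiset.map_congr rfl ?_
    intro b hb
    rw [Multiset.mem_coe, Finset.mem_toList] at hb
    exact (hT b hb).2.2.2
  have hceq : (Multiset.map (fun p : ℕ × ℕ => (((s₁.drop p.1).take p.2 : List α) : Multiset α))
        ↑(T.toList.map (fun b => (b.1, b.2.2)))).sum
      = (Multiset.map (fun p : ℕ × ℕ => (((s₂.drop p.1).take p.2 : List α) : Multiset α))
        ↑(T.toList.map (fun b => (b.2.1, b.2.2)))).sum := by
    have e₁ : (fun p : ℕ × ℕ => (((s₁.drop p.1).take p.2 : List α) : Multiset α))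
        = (fun l : List α => (l : Multiset α)) ∘ (fun p : ℕ × ℕ => (s₁.drop p.1).take p.2) := rfl
    have e₂ : (fun p : ℕ × ℕ => (((s₂.drop p.1).take p.2 : List α) : Multiset α))
        = (fun l : List α => (l : Multiset α)) ∘ (fun p : ℕ × ℕ => (s₂.drop p.1).take p.2) := rfl
    rw [e₁, e₂, ← Multiset.map_map, ← Multiset.map_map, hpieceeq]
  have hu : u₁ = u₂ := by
    have hs : (↑s₁ : Multiset α) = (↑s₂ : Multiset α) := Multiset.coe_eq_coe.mpr hrel
    rw [hc₁, hc₂, hceq] at hs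
    exact add_left_cancel hs
  have hperm : P₁.Perm P₂ := Multiset.coe_eq_coe.mp (by rw [hm₁, hm₂, hpieceeq, hu])
  refine ⟨P₁, P₂, ⟨hperm, hne₁, hfl₁, hfl₂⟩, ?_⟩
  have hsum : ((T.toList.map (fun b => (b.1, b.2.2))).map (fun p : ℕ × ℕ => p.2 - 1)).sum
      = ∑ b ∈ T, (b.2.2 - 1) := by
    rw [List.map_map]
    exact Finset.sum_map_toList T (fun b => b.2.2 - 1)
  omega
end

section
/- Let s₁ and s₂ be strings of length n admitting a common partition of size m. Then there exists a finite set T of blocks of (s₁, s₂), each of length t_b ≥ 2, such that any two distinct blocks in T do not overlap and m = n − Σ_{b∈T}(t_b − 1). -/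
/-! Each piece `p` of the partition starts at some offset in `s₁` and, through the permutation
relating the two orderings, at some offset in `s₂`; these two offsets with length `|p|` form a
block. The pieces of one ordering occupy disjoint intervals, so blocks coming from distinct
pieces do not overlap. Keeping only the pieces of length at least `2` loses nothing in the count
`n = Σ |p| = m + Σ (|p| - 1)`. -/

open Finset Function

section

variable {α : Type*}

def pieceStart (L : List (List α)) (i : ℕ) : ℕ := ((L.map List.length).take i).sum

lemma pieceStart_succ (L : List (List α)) {i : ℕ} (hi : i < L.length) :
    pieceStart L (i + 1) = pieceStart L i + L[i].length := by
  rw [pieceStart, pieceStart, List.sum_take_succ _ _ (by simpa), List.getElem_map]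

lemma pieceStart_mono (L : List (List α)) : Monotone (pieceStart L) := fun _ _ hij =>
  (List.take_sublist_take_left hij).sum_le_sum fun _ _ => Nat.zero_le _

lemma pieceStart_add_length_le {L : List (List α)} {i j : ℕ} (hi : i < L.length) (hij : i < j) :
    pieceStart L i + L[i].length ≤ pieceStart L j :=
  pieceStart_succ L hi ▸ pieceStart_mono L hij

lemma pieceStart_length (L : List (List α)) : pieceStart L L.length = L.flatten.length := by
  rw [pieceStart, List.length_flatten, List.take_of_length_le (by simp)]

lemma pieceStart_add_length_le_length_flatten {L : List (List α)} {i : ℕ} (hi : i < L.length) :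
    pieceStart L i + L[i].length ≤ L.flatten.length :=
  pieceStart_length L ▸ pieceStart_add_length_le hi hi

lemma take_drop_pieceStart {L : List (List α)} {i : ℕ} (hi : i < L.length) :
    (L.flatten.drop (pieceStart L i)).take L[i].length = L[i] := by
  have hsplit : L.flatten = (L.take i).flatten ++ (L[i] ++ (L.drop (i + 1)).flatten) := by
    conv_lhs => rw [← List.take_append_drop i L]
    rw [List.flatten_append, List.drop_eq_getElem_cons hi, List.flatten_cons]
  have hstart : pieceStart L i = (L.take i).flatten.length := by
    rw [pieceStart, List.length_flatten, List.map_take]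
  rw [hsplit, hstart, List.drop_left, List.take_left]

lemma length_flatten_eq_length_add_sum {L : List (List α)} (hne : ∀ p ∈ L, p ≠ []) :
    L.flatten.length = L.length + ∑ i : Fin L.length, (L[(i : ℕ)].length - 1) := by
  have hpos : ∀ i : Fin L.length, L[(i : ℕ)].length - 1 + 1 = L[(i : ℕ)].length := fun i =>
    Nat.sub_add_cancel (List.length_pos_iff.mpr (hne _ (List.getElem_mem _)))
  rw [List.length_flatten, ← Fin.sum_univ_fun_getElem, ← Finset.sum_congr rfl fun i _ => hpos i,
    Finset.sum_add_distrib]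
  simp [add_comm]

lemma pieceStart_strictMono {L : List (List α)} (hne : ∀ p ∈ L, p ≠ []) :
    StrictMono fun i : Fin L.length => pieceStart L i := fun i _ hij =>
  Nat.lt_of_lt_of_le
    (Nat.lt_add_of_pos_right (List.length_pos_iff.mpr (hne _ (List.getElem_mem i.isLt))))
    (pieceStart_add_length_le i.isLt hij)

lemma pieceStart_disjoint {L : List (List α)} {i j : Fin L.length} (hij : i ≠ j) :
    pieceStart L i + L[(i : ℕ)].length ≤ pieceStart L j ∨
      pieceStart L j + L[(j : ℕ)].length ≤ pieceStart L i := by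
  rcases lt_or_gt_of_ne hij with h | h
  · exact .inl (pieceStart_add_length_le i.isLt h)
  · exact .inr (pieceStart_add_length_le j.isLt h)

lemma not_overlap_of_disjoint {b b' : ℕ × ℕ × ℕ}
    (h₁ : b.1 + b.2.2 ≤ b'.1 ∨ b'.1 + b'.2.2 ≤ b.1)
    (h₂ : b.2.1 + b.2.2 ≤ b'.2.1 ∨ b'.2.1 + b'.2.2 ≤ b.2.1) : ¬ Overlap b b' := by
  unfold Overlap
  omega

def pieceBlock (P₁ P₂ : List (List α)) (σ : Fin P₁.length → Fin P₂.length)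
    (i : Fin P₁.length) : ℕ × ℕ × ℕ :=
  (pieceStart P₁ i, pieceStart P₂ (σ i), P₁[(i : ℕ)].length)

section pieceBlock

variable {P₁ P₂ : List (List α)} {σ : Fin P₁.length → Fin P₂.length}

lemma isBlock_pieceBlock (hσ : ∀ i, P₂[(σ i : ℕ)] = P₁[(i : ℕ)]) (hne : ∀ p ∈ P₁, p ≠ [])
    (i : Fin P₁.length) : IsBlock P₁.flatten P₂.flatten (pieceBlock P₁ P₂ σ i) := by
  refine ⟨List.length_pos_iff.mpr (hne _ (List.getElem_mem i.isLt)),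
    pieceStart_add_length_le_length_flatten i.isLt, ?_, ?_⟩
  · have h₂ := pieceStart_add_length_le_length_flatten (σ i).isLt
    rwa [hσ] at h₂
  · have h₂ := take_drop_pieceStart (σ i).isLt
    rw [hσ] at h₂
    exact (take_drop_pieceStart i.isLt).trans h₂.symm

lemma pieceBlock_injective (hne : ∀ p ∈ P₁, p ≠ []) : Injective (pieceBlock P₁ P₂ σ) :=
  fun _ _ h => (pieceStart_strictMono hne).injective (congrArg Prod.fst h)

lemma not_overlap_pieceBlock (hσ : ∀ i, P₂[(σ i : ℕ)] = P₁[(i : ℕ)]) (hσinj : Injective σ)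
    {i j : Fin P₁.length} (hij : i ≠ j) :
    ¬ Overlap (pieceBlock P₁ P₂ σ i) (pieceBlock P₁ P₂ σ j) := by
  have h₂ := pieceStart_disjoint (hσinj.ne hij)
  simp only [hσ] at h₂
  exact not_overlap_of_disjoint (pieceStart_disjoint hij) h₂

end pieceBlock

end

theorem blocks_of_commonPartition_general {α : Type*} (s₁ s₂ : List α) (n m : ℕ)
    (h₁ : s₁.length = n)
    (P₁ P₂ : List (List α)) (hP : CommonPartition s₁ s₂ P₁ P₂) (hm : P₁.length = m) :
    ∃ T : Finset (ℕ × ℕ × ℕ),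
      (∀ b ∈ T, IsBlock s₁ s₂ b ∧ 2 ≤ b.2.2) ∧
      (∀ b ∈ T, ∀ b' ∈ T, b ≠ b' → ¬ Overlap b b') ∧
      m = n - ∑ b ∈ T, (b.2.2 - 1) := by
  classical
  obtain ⟨hperm, hne, rfl, rfl⟩ := hP
  let σ := hperm.idxBij
  have hσ : ∀ i, P₂[(σ i : ℕ)] = P₁[(i : ℕ)] := hperm.getElem_idxBij_eq_getElem
  have hσinj : Injective σ := hperm.subperm.idxInj_injective
  refine ⟨(univ.filter fun i : Fin P₁.length => 2 ≤ P₁[(i : ℕ)].length).image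
    (pieceBlock P₁ P₂ σ), ?_, ?_, ?_⟩
  · simp only [mem_image, mem_filter, mem_univ, true_and]
    rintro _ ⟨i, hi, rfl⟩
    exact ⟨isBlock_pieceBlock hσ hne i, hi⟩
  · simp only [mem_image, mem_filter, mem_univ, true_and]
    rintro _ ⟨i, -, rfl⟩ _ ⟨j, -, rfl⟩ hij
    exact not_overlap_pieceBlock hσ hσinj (ne_of_apply_ne _ hij)
  · rw [sum_image fun i _ j _ h => pieceBlock_injective hne h,
      sum_filter_of_ne fun i _ h => by simp only [pieceBlock] at h; omega,
      ← hm, ← h₁, length_flatten_eq_length_add_sum hne]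
    simp only [pieceBlock]
    omega

/-- From a common partition of size `m` of strings of length `n`, one obtains a set `T`
of pairwise non-overlapping blocks, each of length at least `2`, with
`m = n − Σ_{b∈T} (t_b − 1)`. -/
theorem blocks_of_commonPartition {α : Type*} (s₁ s₂ : List α) (n m : ℕ)
    (h₁ : s₁.length = n) (h₂ : s₂.length = n)
    (P₁ P₂ : List (List α)) (hP : CommonPartition s₁ s₂ P₁ P₂) (hm : P₁.length = m) :
    ∃ T : Finset (ℕ × ℕ × ℕ),
      (∀ b ∈ T, IsBlock s₁ s₂ b ∧ 2 ≤ b.2.2) ∧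
      (∀ b ∈ T, ∀ b' ∈ T, b ≠ b' → ¬ Overlap b b') ∧
      m = n - ∑ b ∈ T, (b.2.2 - 1) :=
  blocks_of_commonPartition_general s₁ s₂ n m h₁ P₁ P₂ hP hm
end

section
/- Let s₁ and s₂ be related strings of length n. The minimum size of a common partition of s₁ and s₂ equals n − M, where M is the maximum of Σ_{b∈T}(t_b − 1) over all finite sets T of blocks of (s₁, s₂) with each t_b ≥ 2 such that any two distinct blocks in T do not overlap (the maximum is taken over all such T, including T = ∅). -/
section

variable {α β : Type*}

theorem not_overlap_iff {b b' : ℕ × ℕ × ℕ} :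
    ¬ Overlap b b' ↔ (b.1 + b.2.2 ≤ b'.1 ∨ b'.1 + b'.2.2 ≤ b.1) ∧
      (b.2.1 + b.2.2 ≤ b'.2.1 ∨ b'.2.1 + b'.2.2 ≤ b.2.1) := by
  unfold Overlap
  omega

theorem isBlock_of_take_drop_eq {s₁ s₂ p : List α} {k₁ k₂ : ℕ} (hp : p ≠ [])
    (h₁ : (s₁.drop k₁).take p.length = p) (h₂ : (s₂.drop k₂).take p.length = p) :
    IsBlock s₁ s₂ (k₁, k₂, p.length) := by
  have hl₁ := congrArg List.length h₁
  have hl₂ := congrArg List.length h₂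
  simp only [List.length_take, List.length_drop] at hl₁ hl₂
  have hpos := List.length_pos_of_ne_nil hp
  refine ⟨hpos, ?_, ?_, h₁.trans h₂.symm⟩ <;> dsimp only <;> omega

theorem Finset.sum_sub_one_add_card {T : Finset β} {f : β → ℕ} (hf : ∀ b ∈ T, 1 ≤ f b) :
    ∑ b ∈ T, (f b - 1) + T.card = ∑ b ∈ T, f b := by
  rw [Finset.card_eq_sum_ones, ← Finset.sum_add_distrib]
  exact Finset.sum_congr rfl fun b hb => Nat.sub_add_cancel (hf b hb)

theorem Multiset.Rel.exists_map_fst_map_snd {r : α → β → Prop} {s : Multiset α}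
    {t : Multiset β} (h : Multiset.Rel r s t) :
    ∃ u : Multiset (α × β), (∀ p ∈ u, r p.1 p.2) ∧ u.map Prod.fst = s ∧ u.map Prod.snd = t := by
  induction h with
  | zero => exact ⟨0, by simp, rfl, rfl⟩
  | @cons a b _ _ hab _ ih =>
    obtain ⟨u, hu, rfl, rfl⟩ := ih
    exact ⟨(a, b) ::ₘ u, by simpa [hab] using hu, by simp, by simp⟩

def placements : ℕ → List (List α) → List (ℕ × List α)
  | _, [] => []
  | o, p :: P => (o, p) :: placements (o + p.length) P

theorem map_snd_placements (o : ℕ) (P : List (List α)) :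
    (placements o P).map Prod.snd = P := by
  induction P generalizing o with
  | nil => rfl
  | cons p P ih => simp [placements, ih]

theorem le_fst_of_mem_placements {o : ℕ} {P : List (List α)} {x : ℕ × List α}
    (hx : x ∈ placements o P) : o ≤ x.1 := by
  induction P generalizing o with
  | nil => simp [placements] at hx
  | cons p P ih =>
    rcases List.mem_cons.1 hx with rfl | hx
    · rfl
    · exact (Nat.le_add_right _ _).trans (ih hx)

theorem pairwise_placements (o : ℕ) (P : List (List α)) :
    (placements o P).Pairwise fun x y => x.1 + x.2.length ≤ y.1 := by
  induction P generalizing o with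
  | nil => exact List.Pairwise.nil
  | cons p P ih => exact List.pairwise_cons.2 ⟨fun _ hx => le_fst_of_mem_placements hx, ih _⟩

theorem take_drop_of_mem_placements {s : List α} {o : ℕ} {P : List (List α)}
    (hs : s.drop o = P.flatten) {x : ℕ × List α} (hx : x ∈ placements o P) :
    (s.drop x.1).take x.2.length = x.2 := by
  induction P generalizing o with
  | nil => simp [placements] at hx
  | cons p P ih =>
    rcases List.mem_cons.1 hx with rfl | hx
    · simp [hs]
    · refine ih ?_ hx
      rw [← List.drop_drop, hs, List.flatten_cons, List.drop_left]

theorem disjoint_of_mem_placements {o : ℕ} {P : List (List α)} {x y : ℕ × List α}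
    (hx : x ∈ placements o P) (hy : y ∈ placements o P) (hxy : x ≠ y) :
    x.1 + x.2.length ≤ y.1 ∨ y.1 + y.2.length ≤ x.1 := by
  let R : ℕ × List α → ℕ × List α → Prop := fun a b => a.1 + a.2.length ≤ b.1
  have : Std.Symm fun a b => R a b ∨ R b a := ⟨fun _ _ h => h.symm⟩
  exact List.Pairwise.forall (R := fun a b => R a b ∨ R b a)
    ((pairwise_placements o P).imp Or.inl) hx hy hxy

theorem nodup_map_fst_placements {o : ℕ} {P : List (List α)} (hP : ∀ p ∈ P, p ≠ []) :
    ((placements o P).map Prod.fst).Nodup := by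
  refine List.pairwise_map.2 ((pairwise_placements o P).imp_of_mem fun hx _ hle => ?_)
  have := List.length_pos_of_ne_nil
    (hP _ (map_snd_placements o P ▸ List.mem_map_of_mem hx))
  omega

theorem CommonPartition.exists_covering_blocks {s₁ s₂ : List α} {P₁ P₂ : List (List α)}
    (h : CommonPartition s₁ s₂ P₁ P₂) :
    ∃ T : Finset (ℕ × ℕ × ℕ), (∀ b ∈ T, IsBlock s₁ s₂ b) ∧
      (∀ b ∈ T, ∀ b' ∈ T, b ≠ b' → ¬ Overlap b b') ∧
      T.card = P₁.length ∧ ∑ b ∈ T, b.2.2 = s₁.length := by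
  obtain ⟨hperm, hne₁, rfl, rfl⟩ := h
  have hne₂ : ∀ p ∈ P₂, p ≠ [] := fun p hp => hne₁ p (hperm.mem_iff.2 hp)
  set X₁ := placements 0 P₁
  set X₂ := placements 0 P₂
  -- `P₁ ~ P₂` pairs each placed piece of `s₁` with a placed copy of the same string in `s₂`
  have hrel : Multiset.Rel (fun x y : ℕ × List α => x.2 = y.2) X₁ X₂ := by
    rw [← Multiset.rel_map (f := Prod.snd) (g := Prod.snd), Multiset.rel_eq, Multiset.map_coe,
      Multiset.map_coe, map_snd_placements, map_snd_placements]
    exact Multiset.coe_eq_coe.2 hperm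
  obtain ⟨u, hu, hu₁, hu₂⟩ := hrel.exists_map_fst_map_snd
  have hmem₁ : ∀ p ∈ u, p.1 ∈ X₁ := fun p hp =>
    Multiset.mem_coe.1 (hu₁ ▸ Multiset.mem_map_of_mem Prod.fst hp)
  have hmem₂ : ∀ p ∈ u, p.2 ∈ X₂ := fun p hp =>
    Multiset.mem_coe.1 (hu₂ ▸ Multiset.mem_map_of_mem Prod.snd hp)
  have hstart₁ : (u.map fun p => p.1.1).Nodup := by
    have := Multiset.coe_nodup.2 (nodup_map_fst_placements (o := 0) hne₁)
    rwa [← Multiset.map_coe, ← hu₁, Multiset.map_map] at this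
  have hstart₂ : (u.map fun p => p.2.1).Nodup := by
    have := Multiset.coe_nodup.2 (nodup_map_fst_placements (o := 0) hne₂)
    rwa [← Multiset.map_coe, ← hu₂, Multiset.map_map] at this
  let block : (ℕ × List α) × (ℕ × List α) → ℕ × ℕ × ℕ := fun p => (p.1.1, p.2.1, p.1.2.length)
  have hnodup : (u.map block).Nodup :=
    Multiset.Nodup.of_map Prod.fst (by rwa [Multiset.map_map])
  refine ⟨⟨u.map block, hnodup⟩, ?_, ?_, ?_, ?_⟩
  · simp only [Finset.mem_mk, Multiset.mem_map]
    rintro _ ⟨p, hp, rfl⟩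
    have hp₁ := take_drop_of_mem_placements (s := P₁.flatten) (by simp) (hmem₁ p hp)
    have hp₂ := take_drop_of_mem_placements (s := P₂.flatten) (by simp) (hmem₂ p hp)
    rw [← hu p hp] at hp₂
    exact isBlock_of_take_drop_eq
      (hne₁ _ (map_snd_placements 0 P₁ ▸ List.mem_map_of_mem (hmem₁ p hp))) hp₁ hp₂
  · simp only [Finset.mem_mk, Multiset.mem_map]
    rintro _ ⟨p, hp, rfl⟩ _ ⟨q, hq, rfl⟩ hblock
    have hpq : p ≠ q := fun h => hblock (h ▸ rfl)
    have h₁ : p.1 ≠ q.1 := fun h =>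
      hpq (Multiset.inj_on_of_nodup_map hstart₁ p hp q hq (congrArg Prod.fst h))
    have h₂ : p.2 ≠ q.2 := fun h =>
      hpq (Multiset.inj_on_of_nodup_map hstart₂ p hp q hq (congrArg Prod.fst h))
    have d₁ := disjoint_of_mem_placements (hmem₁ p hp) (hmem₁ q hq) h₁
    have d₂ := disjoint_of_mem_placements (hmem₂ p hp) (hmem₂ q hq) h₂
    rw [← hu p hp, ← hu q hq] at d₂
    exact not_overlap_iff.2 ⟨d₁, d₂⟩
  · rw [Finset.card_mk, Multiset.card_map, ← Multiset.card_map Prod.fst, hu₁, Multiset.coe_card,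
      ← List.length_map, map_snd_placements]
  · rw [Finset.sum_mk, Multiset.map_map, List.length_flatten, ← map_snd_placements 0 P₁,
      List.map_map, ← Multiset.sum_coe, ← Multiset.map_coe, ← hu₁, Multiset.map_map]
    rfl

theorem CommonPartition.exists_blocks {s₁ s₂ : List α} {P₁ P₂ : List (List α)}
    (h : CommonPartition s₁ s₂ P₁ P₂) :
    ∃ T : Finset (ℕ × ℕ × ℕ), (∀ b ∈ T, IsBlock s₁ s₂ b ∧ 2 ≤ b.2.2) ∧
      (∀ b ∈ T, ∀ b' ∈ T, b ≠ b' → ¬ Overlap b b') ∧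
      ∑ b ∈ T, (b.2.2 - 1) + P₁.length = s₁.length := by
  obtain ⟨T, hT, hov, hcard, hsum⟩ := h.exists_covering_blocks
  refine ⟨T.filter (2 ≤ ·.2.2), fun b hb => ?_, fun b hb b' hb' => ?_, ?_⟩
  · rw [Finset.mem_filter] at hb
    exact ⟨hT b hb.1, hb.2⟩
  · exact hov b (Finset.mem_of_mem_filter b hb) b' (Finset.mem_of_mem_filter b' hb')
  · rw [Finset.sum_filter_of_ne fun b _ hb => by omega, ← hcard,
      Finset.sum_sub_one_add_card fun b hb => (hT b hb).1, hsum]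

/-- Cuts `s.drop i` into the substrings `(s.drop k).take t` for the intervals `(k, t) ∈ L`, meant
to be disjoint and listed left to right, and singletons for the characters outside them. -/
def cutAlong (s : List α) : ℕ → List (ℕ × ℕ) → List (List α)
  | i, [] => (s.drop i).map ([·])
  | i, x :: L =>
    ((s.drop i).take (x.1 - i)).map ([·]) ++ (s.drop x.1).take x.2 :: cutAlong s (x.1 + x.2) L

theorem flatten_cutAlong (s : List α) {i : ℕ} {L : List (ℕ × ℕ)} (hi : ∀ x ∈ L, i ≤ x.1)
    (hL : L.Pairwise fun x y => x.1 + x.2 ≤ y.1) : (cutAlong s i L).flatten = s.drop i := by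
  induction L generalizing i with
  | nil => exact List.flatMap_singleton' _
  | cons x L ih =>
    rw [List.pairwise_cons] at hL
    have hx := hi x List.mem_cons_self
    simp only [cutAlong, List.flatten_append, List.flatten_cons, ← List.flatMap_def,
      List.flatMap_singleton', ih hL.1 hL.2]
    conv_rhs => rw [← List.take_append_drop (x.1 - i) (s.drop i), List.drop_drop,
      Nat.add_sub_cancel' hx, ← List.take_append_drop x.2 (s.drop x.1), List.drop_drop]

theorem exists_perm_cutAlong (s : List α) (i : ℕ) (L : List (ℕ × ℕ)) :
    ∃ U : List α,
      (cutAlong s i L).Perm (L.map (fun x => (s.drop x.1).take x.2) ++ U.map ([·])) := by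
  induction L generalizing i with
  | nil => exact ⟨s.drop i, by simp [cutAlong]⟩
  | cons x L ih =>
    obtain ⟨U, hU⟩ := ih (x.1 + x.2)
    refine ⟨(s.drop i).take (x.1 - i) ++ U, ?_⟩
    simp only [cutAlong, List.map_cons, List.map_append]
    exact List.perm_middle.trans
      (((hU.append_left _).trans (List.perm_append_comm_assoc _ _ _)).cons _)

theorem Finset.exists_perm_pairwise_of_disjoint (T : Finset β) (pos len : β → ℕ)
    (hlen : ∀ b ∈ T, 1 ≤ len b)
    (hdisj : ∀ b ∈ T, ∀ b' ∈ T, b ≠ b' → pos b + len b ≤ pos b' ∨ pos b' + len b' ≤ pos b) :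
    ∃ l : List β, l.Perm T.toList ∧ l.Pairwise fun b b' => pos b + len b ≤ pos b' := by
  have hperm := List.mergeSort_perm T.toList fun b b' => pos b ≤ pos b'
  have hmem : ∀ b ∈ T.toList.mergeSort fun b b' => pos b ≤ pos b', b ∈ T := fun b hb =>
    Finset.mem_toList.1 (hperm.subset hb)
  have hsorted := List.pairwise_mergeSort (le := fun b b' => decide (pos b ≤ pos b'))
    (fun _ _ _ => by simp only [decide_eq_true_eq]; omega)
    (fun _ _ => by simp only [Bool.or_eq_true, decide_eq_true_eq]; omega) T.toList
  refine ⟨_, hperm, (hsorted.and (hperm.nodup_iff.2 T.nodup_toList)).imp_of_mem ?_⟩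
  rintro b b' hb hb' ⟨hle, hne⟩
  have := hdisj b (hmem b hb) b' (hmem b' hb') hne
  have := hlen b' (hmem b' hb')
  simp only [decide_eq_true_eq] at hle
  omega

theorem exists_cut_of_pairwise_disjoint (s : List α) (T : Finset β) (pos len : β → ℕ)
    (hlen : ∀ b ∈ T, 1 ≤ len b)
    (hdisj : ∀ b ∈ T, ∀ b' ∈ T, b ≠ b' → pos b + len b ≤ pos b' ∨ pos b' + len b' ≤ pos b) :
    ∃ (P : List (List α)) (U : List α), P.flatten = s ∧
      P.Perm (T.toList.map (fun b => (s.drop (pos b)).take (len b)) ++ U.map ([·])) := by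
  obtain ⟨l, hl, hsorted⟩ := T.exists_perm_pairwise_of_disjoint pos len hlen hdisj
  obtain ⟨U, hU⟩ := exists_perm_cutAlong s 0 (l.map fun b => (pos b, len b))
  refine ⟨_, U, flatten_cutAlong s (fun _ _ => Nat.zero_le _) (List.pairwise_map.2 hsorted),
    hU.trans ?_⟩
  rw [List.map_map]
  exact (hl.map _).append_right _

theorem exists_commonPartition_of_blocks {s₁ s₂ : List α} (hrel : s₁.Perm s₂)
    {T : Finset (ℕ × ℕ × ℕ)} (hT : ∀ b ∈ T, IsBlock s₁ s₂ b)
    (hov : ∀ b ∈ T, ∀ b' ∈ T, b ≠ b' → ¬ Overlap b b') :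
    ∃ P₁ P₂ : List (List α), CommonPartition s₁ s₂ P₁ P₂ ∧
      P₁.length + ∑ b ∈ T, (b.2.2 - 1) = s₁.length := by
  have hlen : ∀ b ∈ T, 1 ≤ b.2.2 := fun b hb => (hT b hb).1
  obtain ⟨P₁, U₁, hP₁, hPU₁⟩ := exists_cut_of_pairwise_disjoint s₁ T (·.1) (·.2.2) hlen
    fun b hb b' hb' hne => (not_overlap_iff.1 (hov b hb b' hb' hne)).1
  obtain ⟨P₂, U₂, hP₂, hPU₂⟩ := exists_cut_of_pairwise_disjoint s₂ T (·.2.1) (·.2.2) hlen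
    fun b hb b' hb' hne => (not_overlap_iff.1 (hov b hb b' hb' hne)).2
  set Q := T.toList.map fun b => (s₁.drop b.1).take b.2.2
  have hQ : T.toList.map (fun b => (s₂.drop b.2.1).take b.2.2) = Q :=
    List.map_congr_left fun b hb => ((hT b (Finset.mem_toList.1 hb)).2.2.2).symm
  rw [hQ] at hPU₂
  have hs₁ : s₁.Perm (Q.flatten ++ U₁) := by
    simpa [hP₁, ← List.flatMap_def] using hPU₁.flatten
  have hs₂ : s₂.Perm (Q.flatten ++ U₂) := by
    simpa [hP₂, ← List.flatMap_def] using hPU₂.flatten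
  -- the leftover characters agree since the block contents do and `s₁ ~ s₂`
  have hU : U₁.Perm U₂ := (List.perm_append_left_iff _).1 ((hs₁.symm.trans hrel).trans hs₂)
  have hQlen : Q.flatten.length = ∑ b ∈ T, b.2.2 := by
    rw [List.length_flatten, List.map_map, ← Finset.sum_map_toList]
    refine congrArg List.sum (List.map_congr_left fun b hb => ?_)
    obtain ⟨-, hb₁, -⟩ := hT b (Finset.mem_toList.1 hb)
    simp only [Function.comp_apply, List.length_take, List.length_drop]
    omega
  refine ⟨P₁, P₂, ⟨hPU₁.trans (((hU.map _).append_left Q).trans hPU₂.symm), ?_, hP₁, hP₂⟩, ?_⟩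
  · intro p hp
    rcases List.mem_append.1 (hPU₁.subset hp) with hp | hp
    · obtain ⟨b, hb, rfl⟩ := List.mem_map.1 hp
      obtain ⟨hb₀, hb₁, -⟩ := hT b (Finset.mem_toList.1 hb)
      rw [← List.length_pos_iff, List.length_take, List.length_drop]
      exact lt_min (by omega) (by omega)
    · obtain ⟨a, -, rfl⟩ := List.mem_map.1 hp
      exact List.cons_ne_nil a []
  · have h₁ := hPU₁.length_eq
    have h₂ := hs₁.length_eq
    rw [List.length_append, hQlen] at h₂
    simp only [List.length_append, List.length_map, Finset.length_toList, Q] at h₁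
    have := Finset.sum_sub_one_add_card hlen
    omega

end

theorem exists_isGreatest_isLeast_of_add_eq {S P : Set ℕ} {n : ℕ} (hS : S.Nonempty)
    (hSP : ∀ k ∈ S, ∃ m ∈ P, m + k = n) (hPS : ∀ m ∈ P, ∃ k ∈ S, k + m = n) :
    ∃ M, IsGreatest S M ∧ IsLeast P (n - M) := by
  obtain ⟨M, hM⟩ := BddAbove.exists_isGreatest_of_nonempty
    ⟨n, fun k hk => by obtain ⟨m, -, h⟩ := hSP k hk; omega⟩ hS
  obtain ⟨m, hm, hmM⟩ := hSP M hM.1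
  refine ⟨M, hM, by rwa [← hmM, Nat.add_sub_cancel], fun m' hm' => ?_⟩
  obtain ⟨k, hk, hkm⟩ := hPS m' hm'
  have := hM.2 hk
  omega

theorem min_commonPartition_eq_general {α : Type*} (s₁ s₂ : List α) (n : ℕ)
    (h₁ : s₁.length = n) (hrel : s₁.Perm s₂) :
    ∃ M : ℕ,
      IsGreatest {k : ℕ | ∃ T : Finset (ℕ × ℕ × ℕ),
          (∀ b ∈ T, IsBlock s₁ s₂ b ∧ 2 ≤ b.2.2) ∧
          (∀ b ∈ T, ∀ b' ∈ T, b ≠ b' → ¬ Overlap b b') ∧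
          k = ∑ b ∈ T, (b.2.2 - 1)} M ∧
      IsLeast {m : ℕ | ∃ P₁ P₂ : List (List α),
          CommonPartition s₁ s₂ P₁ P₂ ∧ P₁.length = m} (n - M) := by
  subst h₁
  refine exists_isGreatest_isLeast_of_add_eq ⟨0, ∅, by simp, by simp, rfl⟩ ?_ ?_
  · rintro k ⟨T, hT, hov, rfl⟩
    obtain ⟨P₁, P₂, hP, hlen⟩ :=
      exists_commonPartition_of_blocks hrel (fun b hb => (hT b hb).1) hov
    exact ⟨P₁.length, ⟨P₁, P₂, hP, rfl⟩, hlen⟩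
  · rintro m ⟨P₁, P₂, hP, rfl⟩
    obtain ⟨T, hT, hov, hsum⟩ := hP.exists_blocks
    exact ⟨_, ⟨T, hT, hov, rfl⟩, hsum⟩

/-- The minimum size of a common partition of related strings of length `n` equals
`n − M`, where `M` is the maximum of `Σ_{b∈T} (t_b − 1)` over all finite sets `T` of
pairwise non-overlapping blocks of length at least `2`. -/
theorem min_commonPartition_eq {α : Type*} (s₁ s₂ : List α) (n : ℕ)
    (h₁ : s₁.length = n) (h₂ : s₂.length = n) (hrel : s₁.Perm s₂) :
    ∃ M : ℕ,
      IsGreatest {k : ℕ | ∃ T : Finset (ℕ × ℕ × ℕ),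
          (∀ b ∈ T, IsBlock s₁ s₂ b ∧ 2 ≤ b.2.2) ∧
          (∀ b ∈ T, ∀ b' ∈ T, b ≠ b' → ¬ Overlap b b') ∧
          k = ∑ b ∈ T, (b.2.2 - 1)} M ∧
      IsLeast {m : ℕ | ∃ P₁ P₂ : List (List α),
          CommonPartition s₁ s₂ P₁ P₂ ∧ P₁.length = m} (n - M) :=
  min_commonPartition_eq_general s₁ s₂ n h₁ hrel
end
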